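/- Let A be an associative R-algebra and Θ ∈ 𝔻er_R A a double derivation, with L_Θ : Ω•_R A → Ω•_R A ⊗ Ω•_R A the Lie derivative determined on generators by L_Θ(a) = Θ(a) and L_Θ(d b) = d Θ(b). Then the Cartan formula holds: L_Θ = d ∘ i_Θ + i_Θ ∘ d. -/
import Mathlib


/-!
STATEMENT 8: For a double derivation `Θ ∈ 𝔻er_R A`, the Lie derivative
`L_Θ` on `Ω•_R A` (determined on generators by `L_Θ(a) = Θ(a)` and
`L_Θ(db) = dΘ(b)`) satisfies the Cartan formula `L_Θ = d ∘ i_Θ + i_Θ ∘ d`.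

The algebra `W = Ω•_R A` of noncommutative differential forms is encoded by
`ι : A → W`, the universal derivation `δ : A → W` (`δa = da`), a grading `𝒲`
by form degree, the differential `d : W → W` (a super-derivation with
`d(ιa) = δa`, `d(δa) = 0`) together with its Koszul extension `dhat` to
`W ⊗ W` (outer bimodule structure), and the contraction `i_Θ` and Lie
derivative `L_Θ` as double derivations of form degree `−1` resp. `0`
determined by their values on the generators.
-/

open TensorProduct

noncomputable section
namespace Stmt8

theorem statement8
    (k : Type) [Field k] (R : Type) [Ring R] [Algebra k R]
    (A : Type) [Ring A] [Algebra k A] (ρ : R →ₐ[k] A)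
    (W : Type) [Ring W] [Algebra k W]
    (𝒲 : ℕ → Submodule k W)               -- grading of `Ω•` by form degree
    (ι : A →ₐ[k] W) (δ : A →ₗ[k] W)
    -- `δ` is an `R`-linear derivation: the image of `d : A → Ω¹`
    (hδ : ∀ a b : A, δ (a * b) = δ a * ι b + ι a * δ b)
    (hδR : ∀ r : R, δ (ρ r) = 0)
    -- grading: `ι(A) ⊆ Ω⁰`, `δ(A) ⊆ Ω¹`, products add degrees, generation
    (hι : ∀ a : A, ι a ∈ 𝒲 0) (hδ1 : ∀ a : A, δ a ∈ 𝒲 1)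
    (hmul : ∀ (p q : ℕ) (x y : W), x ∈ 𝒲 p → y ∈ 𝒲 q → x * y ∈ 𝒲 (p + q))
    (hgen : Algebra.adjoin k (Set.range ι ∪ Set.range δ) = ⊤)
    -- the universal differential `d` on `Ω•_R A` and its Koszul extension to
    -- `Ω• ⊗ Ω•`
    (d : W →ₗ[k] W) (dhat : W ⊗[k] W →ₗ[k] W ⊗[k] W)
    (hd_iota : ∀ a : A, d (ι a) = δ a)
    (hd_delta : ∀ a : A, d (δ a) = 0)
    (hd_leib : ∀ (p : ℕ) (x : W), x ∈ 𝒲 p → ∀ y : W,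
      d (x * y) = d x * y + ((-1 : k) ^ p) • (x * d y))
    (hdhat : ∀ (p : ℕ) (x : W), x ∈ 𝒲 p → ∀ y : W,
      dhat (x ⊗ₜ[k] y) = d x ⊗ₜ[k] y + ((-1 : k) ^ p) • (x ⊗ₜ[k] d y))
    -- the double derivation `Θ ∈ 𝔻er_R A`
    (Θ : A →ₗ[k] A ⊗[k] A)
    (hΘ : ∀ a b : A, Θ (a * b) = Θ a * ((1 : A) ⊗ₜ[k] b) + (a ⊗ₜ[k] (1 : A)) * Θ b)
    (hΘR : ∀ r : R, Θ (ρ r) = 0)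
    -- the contraction `i_Θ`: double derivation of form degree `−1` with
    -- `i_Θ(ιa) = 0`, `i_Θ(δb) = Θ(b)`
    (iΘ : W →ₗ[k] W ⊗[k] W)
    (hiΘ_iota : ∀ a : A, iΘ (ι a) = 0)
    (hiΘ_delta : ∀ a : A, iΘ (δ a) = (TensorProduct.map ι.toLinearMap ι.toLinearMap) (Θ a))
    (hiΘ_leib : ∀ (p : ℕ) (x : W), x ∈ 𝒲 p → ∀ y : W,
      iΘ (x * y) = iΘ x * ((1 : W) ⊗ₜ[k] y) + ((-1 : k) ^ p) • ((x ⊗ₜ[k] (1 : W)) * iΘ y))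
    -- the Lie derivative `L_Θ`: double derivation of form degree `0` with
    -- `L_Θ(ιa) = Θ(a)`, `L_Θ(δb) = dΘ(b)`
    (LΘ : W →ₗ[k] W ⊗[k] W)
    (hLΘ_iota : ∀ a : A, LΘ (ι a) = (TensorProduct.map ι.toLinearMap ι.toLinearMap) (Θ a))
    (hLΘ_delta : ∀ a : A,
      LΘ (δ a) = dhat ((TensorProduct.map ι.toLinearMap ι.toLinearMap) (Θ a)))
    (hLΘ_leib : ∀ x y : W,
      LΘ (x * y) = LΘ x * ((1 : W) ⊗ₜ[k] y) + (x ⊗ₜ[k] (1 : W)) * LΘ y) :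
    -- Cartan formula: `L_Θ = d ∘ i_Θ + i_Θ ∘ d`.
    ∀ x : W, LΘ x = dhat (iΘ x) + iΘ (d x) := by
  classical
  -- the set of "negative-degree-shifted" homogeneous tensors
  set GS : ℕ → Set (W ⊗[k] W) := fun n =>
    {u | ∃ i j : ℕ, ∃ a b : W, a ∈ 𝒲 i ∧ b ∈ 𝒲 j ∧ i + j + 1 = n ∧ u = a ⊗ₜ[k] b}
    with hGS
  -- Koszul rule for `dhat` against right multiplication by `1 ⊗ y`
  have D1 : ∀ (n : ℕ) (u : W ⊗[k] W), u ∈ Submodule.span k (GS n) → ∀ y : W,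
      dhat (u * ((1 : W) ⊗ₜ[k] y)) =
        dhat u * ((1 : W) ⊗ₜ[k] y) - ((-1 : k) ^ n) • (u * ((1 : W) ⊗ₜ[k] d y)) := by
    intro n u hu y
    induction hu using Submodule.span_induction with
    | mem u hu =>
      obtain ⟨i, j, a, b, ha, hb, hn, rfl⟩ := hu
      have hsign : ((-1 : k) ^ i) * ((-1 : k) ^ j) = -((-1 : k) ^ n) := by
        subst hn; rw [← pow_add, pow_succ]; ring
      simp only [Algebra.TensorProduct.tmul_mul_tmul, one_mul, mul_one]
      rw [hdhat i a ha (b * y), hdhat i a ha b, hd_leib j b hb y]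
      simp only [TensorProduct.tmul_add, TensorProduct.tmul_smul, smul_add, smul_smul,
        add_mul, smul_mul_assoc, Algebra.TensorProduct.tmul_mul_tmul, mul_one, hsign]
      module
    | zero => simp
    | add u v hu hv ihu ihv =>
      simp only [add_mul, map_add, ihu, ihv]; module
    | smul r u hu ihu =>
      simp only [smul_mul_assoc, map_smul, ihu]; module
  -- Koszul rule for `dhat` against left multiplication by `x ⊗ 1`
  have D2 : ∀ (n : ℕ) (u : W ⊗[k] W), u ∈ Submodule.span k (GS n) →
      ∀ (p : ℕ) (x : W), x ∈ 𝒲 p →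
      dhat ((x ⊗ₜ[k] (1 : W)) * u) =
        (d x ⊗ₜ[k] (1 : W)) * u + ((-1 : k) ^ p) • ((x ⊗ₜ[k] (1 : W)) * dhat u) := by
    intro n u hu p x hx
    induction hu using Submodule.span_induction with
    | mem u hu =>
      obtain ⟨i, j, a, b, ha, hb, hn, rfl⟩ := hu
      simp only [Algebra.TensorProduct.tmul_mul_tmul, one_mul, mul_one]
      rw [hdhat (p + i) (x * a) (hmul p i x a hx ha) b, hd_leib p x hx a,
        hdhat i a ha b]
      simp only [pow_add, TensorProduct.tmul_add, smul_add, smul_smul, add_mul,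
        mul_add, smul_mul_assoc, mul_smul_comm, Algebra.TensorProduct.tmul_mul_tmul,
        one_mul, TensorProduct.smul_tmul', TensorProduct.tmul_smul,
        TensorProduct.add_tmul]
      module
    | zero => simp
    | add u v hu hv ihu ihv =>
      simp only [mul_add, map_add, ihu, ihv]; module
    | smul r u hu ihu =>
      simp only [mul_smul_comm, map_smul, ihu]; module
  -- multiplication rules for the filtration `span (GS n)`
  have GmulR : ∀ (n : ℕ) (u : W ⊗[k] W), u ∈ Submodule.span k (GS n) →
      ∀ (q : ℕ) (y : W), y ∈ 𝒲 q → u * ((1 : W) ⊗ₜ[k] y) ∈ Submodule.span k (GS (n + q)) := by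
    intro n u hu q y hy
    induction hu using Submodule.span_induction with
    | mem u hu =>
      obtain ⟨i, j, a, b, ha, hb, hn, rfl⟩ := hu
      refine Submodule.subset_span ⟨i, j + q, a, b * y, ha, hmul j q b y hb hy, by omega, ?_⟩
      rw [Algebra.TensorProduct.tmul_mul_tmul, mul_one]
    | zero => simp
    | add u v hu hv ihu ihv => rw [add_mul]; exact Submodule.add_mem _ ihu ihv
    | smul r u hu ihu => rw [smul_mul_assoc]; exact Submodule.smul_mem _ r ihu
  have GmulL : ∀ (n : ℕ) (u : W ⊗[k] W), u ∈ Submodule.span k (GS n) →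
      ∀ (p : ℕ) (x : W), x ∈ 𝒲 p → (x ⊗ₜ[k] (1 : W)) * u ∈ Submodule.span k (GS (p + n)) := by
    intro n u hu p x hx
    induction hu using Submodule.span_induction with
    | mem u hu =>
      obtain ⟨i, j, a, b, ha, hb, hn, rfl⟩ := hu
      refine Submodule.subset_span ⟨p + i, j, x * a, b, hmul p i x a hx ha, hb, by omega, ?_⟩
      rw [Algebra.TensorProduct.tmul_mul_tmul, one_mul]
    | zero => simp
    | add u v hu hv ihu ihv => rw [mul_add]; exact Submodule.add_mem _ ihu ihv
    | smul r u hu ihu => rw [mul_smul_comm]; exact Submodule.smul_mem _ r ihu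
  -- the image of `Θ` lands in degree `0 ⊗ 0`, i.e. in `span (GS 1)`
  have GΘ : ∀ t : A ⊗[k] A,
      (TensorProduct.map ι.toLinearMap ι.toLinearMap) t ∈ Submodule.span k (GS 1) := by
    intro t
    induction t using TensorProduct.induction_on with
    | zero => simp
    | tmul a b =>
      exact Submodule.subset_span ⟨0, 0, ι a, ι b, hι a, hι b, rfl, by simp⟩
    | add s t ihs iht => rw [map_add]; exact Submodule.add_mem _ ihs iht
  -- the key predicate
  set P : ℕ → W → Prop := fun p x =>
    x ∈ 𝒲 p ∧ d x ∈ 𝒲 (p + 1) ∧ iΘ x ∈ Submodule.span k (GS p) ∧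
      LΘ x = dhat (iΘ x) + iΘ (d x) with hP
  have Pι : ∀ a : A, P 0 (ι a) := by
    intro a
    refine ⟨hι a, ?_, ?_, ?_⟩
    · rw [hd_iota]; exact hδ1 a
    · rw [hiΘ_iota]; exact Submodule.zero_mem _
    · rw [hLΘ_iota, hiΘ_iota, hd_iota, hiΘ_delta, map_zero, zero_add]
  have Pδ : ∀ a : A, P 1 (δ a) := by
    intro a
    refine ⟨hδ1 a, ?_, ?_, ?_⟩
    · rw [hd_delta]; exact Submodule.zero_mem _
    · rw [hiΘ_delta]; exact GΘ (Θ a)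
    · rw [hLΘ_delta, hiΘ_delta, hd_delta, map_zero, add_zero]
  have Pmul : ∀ (p : ℕ) (x : W), P p x → ∀ (q : ℕ) (y : W), P q y → P (p + q) (x * y) := by
    intro p x ⟨hx1, hx2, hx3, hx4⟩ q y ⟨hy1, hy2, hy3, hy4⟩
    refine ⟨hmul p q x y hx1 hy1, ?_, ?_, ?_⟩
    · rw [hd_leib p x hx1 y]
      exact Submodule.add_mem _
        (by have h := hmul (p + 1) q (d x) y hx2 hy1
            rwa [show p + 1 + q = p + q + 1 by omega] at h)
        (Submodule.smul_mem _ _ (by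
          have := hmul p (q + 1) x (d y) hx1 hy2
          rwa [show p + (q + 1) = p + q + 1 by omega] at this))
    · rw [hiΘ_leib p x hx1 y]
      refine Submodule.add_mem _ ?_ (Submodule.smul_mem _ _ ?_)
      · exact GmulR p _ hx3 q y hy1
      · exact GmulL q _ hy3 p x hx1
    · have hs : ((-1 : k) ^ (p + 1)) = -((-1 : k) ^ p) := by rw [pow_succ]; ring
      have hpp : ((-1 : k) ^ p) * ((-1 : k) ^ p) = 1 := by
        rw [← pow_add, ← two_mul, pow_mul]; simp
      rw [hLΘ_leib x y, hx4, hy4,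
        hiΘ_leib p x hx1 y, hd_leib p x hx1 y]
      rw [map_add, map_smul, map_add, map_smul,
        D1 p _ hx3 y, D2 q _ hy3 p x hx1,
        hiΘ_leib (p + 1) (d x) hx2 y, hiΘ_leib p x hx1 (d y), hs]
      simp only [add_mul, mul_add, smul_add, smul_sub, smul_smul, smul_mul_assoc,
        mul_smul_comm, neg_smul, neg_mul, hpp, one_smul]
      module
  -- the span of elements satisfying the predicate is a subalgebra, hence everything
  set M : Submodule k W := Submodule.span k {x : W | ∃ p : ℕ, P p x} with hM
  have honeM : (1 : W) ∈ M := by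
    have : (1 : W) = ι 1 := (map_one ι).symm
    rw [this]
    exact Submodule.subset_span ⟨0, Pι 1⟩
  have hmulM : ∀ x ∈ M, ∀ y ∈ M, x * y ∈ M := by
    intro x hx
    induction hx using Submodule.span_induction with
    | mem x hx =>
      intro y hy
      induction hy using Submodule.span_induction with
      | mem y hy =>
        obtain ⟨p, hxp⟩ := hx; obtain ⟨q, hyq⟩ := hy
        exact Submodule.subset_span ⟨p + q, Pmul p x hxp q y hyq⟩
      | zero => rw [mul_zero]; exact Submodule.zero_mem _
      | add y z hy hz ihy ihz => rw [mul_add]; exact Submodule.add_mem _ ihy ihz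
      | smul r y hy ihy => rw [mul_smul_comm]; exact Submodule.smul_mem _ r ihy
    | zero => intro y hy; rw [zero_mul]; exact Submodule.zero_mem _
    | add x z hx hz ihx ihz =>
      intro y hy; rw [add_mul]; exact Submodule.add_mem _ (ihx y hy) (ihz y hy)
    | smul r x hx ihx =>
      intro y hy; rw [smul_mul_assoc]; exact Submodule.smul_mem _ r (ihx y hy)
  have hMtop : ∀ x : W, x ∈ M := by
    let S : Subalgebra k W :=
      { carrier := M
        mul_mem' := fun hx hy => hmulM _ hx _ hy
        one_mem' := honeM
        add_mem' := fun hx hy => Submodule.add_mem _ hx hy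
        zero_mem' := Submodule.zero_mem _
        algebraMap_mem' := fun r => by
          have : algebraMap k W r = r • (1 : W) := Algebra.algebraMap_eq_smul_one r
          rw [this]; exact Submodule.smul_mem _ r honeM }
    have hsub : Algebra.adjoin k (Set.range ι ∪ Set.range δ) ≤ S := by
      apply Algebra.adjoin_le
      rintro x (⟨a, rfl⟩ | ⟨a, rfl⟩)
      · exact Submodule.subset_span ⟨0, Pι a⟩
      · exact Submodule.subset_span ⟨1, Pδ a⟩
    intro x
    have : x ∈ S := by rw [hgen] at hsub; exact hsub (by trivial)
    exact this
  -- conclude via linearity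
  intro x
  have hker : M ≤ LinearMap.ker (LΘ - dhat ∘ₗ iΘ - iΘ ∘ₗ d) := by
    rw [hM, Submodule.span_le]
    rintro x ⟨p, _, _, _, hx4⟩
    simp only [SetLike.mem_coe, LinearMap.mem_ker, LinearMap.sub_apply, LinearMap.comp_apply,
      hx4]
    abel
  have := hker (hMtop x)
  simp only [LinearMap.mem_ker, LinearMap.sub_apply, LinearMap.comp_apply] at this
  rw [sub_sub] at this
  exact sub_eq_zero.mp this

end Stmt8
end
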